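/- For every γ ∈ (0,π), the quantity s = i e^{-iγ/2} ∫_ℝ [2 cos γ |sech(x sin γ - iγ/2)|² + sin²γ |sech(x sin γ - iγ/2)|⁴] dx equals 4i e^{-iγ/2}/sin γ; in particular s ≠ 0. -/

import Mathlib

/-!
Since `|cosh (a + b i)|² = (cosh 2a + cos 2b) / 2`, on the line `Im z = -γ/2` the integrand,
written in `u = 2 x sin γ` and `c = cos γ`, becomes `4 (1 + c cosh u) / (cosh u + c)²`
(this uses `sin² γ + cos² γ = 1`). That is `4` times the derivative of
`sinh u / (cosh u + c)`, which tends to `∓1` at `∓∞`; so the integral is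
`4 · 2 / (2 sin γ) = 4 / sin γ`.
-/

noncomputable def sech (z : ℂ) : ℂ := (Complex.cosh z)⁻¹

open Filter Topology MeasureTheory

theorem Complex.normSq_cosh_add_mul_I (x y : ℝ) :
    normSq (cosh (x + y * I)) = (Real.cosh (2 * x) + Real.cos (2 * y)) / 2 := by
  rw [cosh_add, cosh_mul_I, sinh_mul_I, ← ofReal_cosh, ← ofReal_sinh, ← ofReal_cos,
    ← ofReal_sin, ← ofReal_mul, ← mul_assoc, ← ofReal_mul, normSq_add_mul_I,
    Real.cosh_two_mul, Real.cos_two_mul]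
  linear_combination
    (Real.cos y ^ 2 - 1 / 2) * Real.cosh_sq x + Real.sinh x ^ 2 * Real.sin_sq_add_cos_sq y

theorem norm_sech_sq (x y : ℝ) :
    ‖sech (x + y * Complex.I)‖ ^ 2 = 2 / (Real.cosh (2 * x) + Real.cos (2 * y)) := by
  rw [sech, norm_inv, inv_pow, Complex.sq_norm, Complex.normSq_cosh_add_mul_I, inv_div]

namespace Real

theorem one_add_sq_div_two_le_cosh (x : ℝ) : 1 + x ^ 2 / 2 ≤ cosh x := by
  have hsinh : (x / 2) ^ 2 ≤ sinh (x / 2) ^ 2 := by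
    rcases le_total 0 (x / 2) with h | h
    · nlinarith [self_le_sinh_iff.2 h]
    · nlinarith [sinh_le_self_iff.2 h]
  have hcosh := cosh_sq (x / 2)
  rw [show x = 2 * (x / 2) by ring, cosh_two_mul]
  nlinarith

theorem integrable_inv_cosh : Integrable fun x ↦ (cosh x)⁻¹ := by
  refine (integrable_inv_one_add_sq.const_mul 2).mono' (by fun_prop) (ae_of_all _ fun x ↦ ?_)
  rw [norm_inv, norm_of_nonneg (cosh_pos x).le, ← div_eq_mul_inv,
    inv_le_comm₀ (cosh_pos x) (by positivity), inv_div]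
  linarith [one_add_sq_div_two_le_cosh x]

theorem tendsto_cosh_atTop : Tendsto cosh atTop atTop :=
  tendsto_atTop_mono (fun x ↦ by rw [cosh_eq]; linarith [exp_pos (-x)])
    (tendsto_exp_atTop.atTop_div_const two_pos)

section

variable {c : ℝ}

theorem cosh_add_pos (hc : -1 < c) (x : ℝ) : 0 < cosh x + c := by
  linarith [one_le_cosh x]

theorem hasDerivAt_sinh_div_cosh_add (hc : -1 < c) (x : ℝ) :
    HasDerivAt (fun x ↦ sinh x / (cosh x + c)) ((1 + c * cosh x) / (cosh x + c) ^ 2) x := by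
  refine ((hasDerivAt_sinh x).div ((hasDerivAt_cosh x).add_const c)
    (cosh_add_pos hc x).ne').congr_deriv ?_
  congr 1
  linear_combination cosh_sq x

theorem tendsto_sinh_div_cosh_add_atTop (c : ℝ) :
    Tendsto (fun x ↦ sinh x / (cosh x + c)) atTop (𝓝 1) := by
  have hden : Tendsto (fun x ↦ cosh x + c) atTop atTop :=
    tendsto_atTop_add_const_right _ c tendsto_cosh_atTop
  have hnum : Tendsto (fun x ↦ c + exp (-x)) atTop (𝓝 c) := by
    simpa using tendsto_const_nhds.add tendsto_exp_neg_atTop_nhds_zero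
  have hlim := (hnum.div_atTop hden).const_sub 1
  rw [sub_zero] at hlim
  refine hlim.congr' ?_
  filter_upwards [hden.eventually_gt_atTop 0] with x hx
  rw [← cosh_sub_sinh]
  field_simp
  ring

theorem tendsto_sinh_div_cosh_add_atBot (c : ℝ) :
    Tendsto (fun x ↦ sinh x / (cosh x + c)) atBot (𝓝 (-1)) := by
  simpa [Function.comp_def, neg_div] using
    ((tendsto_sinh_div_cosh_add_atTop c).comp tendsto_neg_atBot_atTop).neg

theorem abs_one_add_mul_cosh_div_sq_le (hc : -1 < c) (x : ℝ) :
    |(1 + c * cosh x) / (cosh x + c) ^ 2| ≤ (1 + |c|) / min 1 (1 + c) ^ 2 * (cosh x)⁻¹ := by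
  have hcosh := cosh_pos x
  have hm : 0 < min 1 (1 + c) := lt_min one_pos (by linarith)
  have hden : min 1 (1 + c) * cosh x ≤ cosh x + c := by
    rcases le_total c 0 with h | h
    · nlinarith [min_le_right 1 (1 + c), one_le_cosh x]
    · nlinarith [min_le_left 1 (1 + c)]
  have hnum : |1 + c * cosh x| ≤ (1 + |c|) * cosh x :=
    calc |1 + c * cosh x| ≤ 1 + |c| * cosh x := by
          simpa [abs_mul, abs_of_pos hcosh] using abs_add_le 1 (c * cosh x)
      _ ≤ (1 + |c|) * cosh x := by nlinarith [one_le_cosh x]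
  rw [abs_div, abs_of_pos (pow_pos (cosh_add_pos hc x) 2)]
  calc |1 + c * cosh x| / (cosh x + c) ^ 2
      ≤ (1 + |c|) * cosh x / (min 1 (1 + c) * cosh x) ^ 2 := by gcongr
    _ = (1 + |c|) / min 1 (1 + c) ^ 2 * (cosh x)⁻¹ := by field_simp

theorem integrable_one_add_mul_cosh_div_sq (hc : -1 < c) :
    Integrable fun x ↦ (1 + c * cosh x) / (cosh x + c) ^ 2 := by
  refine (integrable_inv_cosh.const_mul _).mono' ?_
    (ae_of_all _ fun x ↦ (norm_eq_abs _).trans_le (abs_one_add_mul_cosh_div_sq_le hc x))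
  exact ((by fun_prop : Continuous fun x ↦ 1 + c * cosh x).div (by fun_prop)
    fun x ↦ (pow_pos (cosh_add_pos hc x) 2).ne').aestronglyMeasurable

theorem integral_one_add_mul_cosh_div_sq (hc : -1 < c) :
    ∫ x, (1 + c * cosh x) / (cosh x + c) ^ 2 = 2 := by
  rw [integral_of_hasDerivAt_of_tendsto (hasDerivAt_sinh_div_cosh_add hc)
    (integrable_one_add_mul_cosh_div_sq hc) (tendsto_sinh_div_cosh_add_atBot c)
    (tendsto_sinh_div_cosh_add_atTop c)]
  norm_num

end

end Real

open Real in
theorem cos_mul_norm_sech_sq_add_sin_sq_mul_norm_sech_pow_four (γ x : ℝ) (hγ : -1 < cos γ) :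
    2 * cos γ * ‖sech ((x : ℂ) * sin γ - Complex.I * γ / 2)‖ ^ 2 +
        sin γ ^ 2 * ‖sech ((x : ℂ) * sin γ - Complex.I * γ / 2)‖ ^ 4 =
      4 * ((1 + cos γ * cosh (2 * sin γ * x)) / (cosh (2 * sin γ * x) + cos γ) ^ 2) := by
  have hsech : ‖sech ((x : ℂ) * sin γ - Complex.I * γ / 2)‖ ^ 2 =
      2 / (cosh (2 * sin γ * x) + cos γ) := by
    rw [show (x : ℂ) * sin γ - Complex.I * γ / 2 = ↑(x * sin γ) + ↑(-γ / 2) * Complex.I by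
      push_cast; ring, norm_sech_sq,
      show 2 * (-γ / 2) = -γ by ring, cos_neg, show 2 * (x * sin γ) = 2 * sin γ * x by ring]
  have hden : cosh (2 * sin γ * x) + cos γ ≠ 0 := (cosh_add_pos hγ _).ne'
  rw [show ‖sech ((x : ℂ) * sin γ - Complex.I * γ / 2)‖ ^ 4 =
    (‖sech ((x : ℂ) * sin γ - Complex.I * γ / 2)‖ ^ 2) ^ 2 by ring, hsech]
  field_simp
  linear_combination 4 * sin_sq_add_cos_sq γ

open Real in
theorem integral_cos_mul_norm_sech_sq_add_sin_sq_mul_norm_sech_pow_four {γ : ℝ}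
    (hγ : γ ∈ Set.Ioo 0 π) :
    ∫ x : ℝ, (2 * cos γ * ‖sech ((x : ℂ) * sin γ - Complex.I * γ / 2)‖ ^ 2 +
        sin γ ^ 2 * ‖sech ((x : ℂ) * sin γ - Complex.I * γ / 2)‖ ^ 4) = 4 / sin γ := by
  have hsin : 0 < sin γ := sin_pos_of_pos_of_lt_pi hγ.1 hγ.2
  have hcos : -1 < cos γ := by
    simpa using cos_lt_cos_of_nonneg_of_le_pi hγ.1.le le_rfl hγ.2
  simp_rw [cos_mul_norm_sech_sq_add_sin_sq_mul_norm_sech_pow_four γ _ hcos]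
  rw [integral_const_mul, Measure.integral_comp_mul_left
    (fun u ↦ (1 + cos γ * cosh u) / (cosh u + cos γ) ^ 2), integral_one_add_mul_cosh_div_sq hcos,
    abs_of_pos (by positivity), smul_eq_mul]
  field_simp

/-- The transversality quantity s in the Lyapunov–Schmidt bifurcation equation equals
4i e^{-iγ/2}/sin γ; in particular s ≠ 0. -/
theorem bifurcation_transversality (γ : ℝ) (hγ : γ ∈ Set.Ioo 0 Real.pi) :
    Complex.I * Complex.exp (-Complex.I * γ / 2) *
      ((∫ x : ℝ, (2 * Real.cos γ *
          ‖sech ((x : ℂ) * Real.sin γ - Complex.I * γ / 2)‖ ^ 2 +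
        (Real.sin γ) ^ 2 *
          ‖sech ((x : ℂ) * Real.sin γ - Complex.I * γ / 2)‖ ^ 4) : ℝ) : ℂ)
      = 4 * Complex.I * Complex.exp (-Complex.I * γ / 2) / (Real.sin γ : ℂ) ∧
    Complex.I * Complex.exp (-Complex.I * γ / 2) *
      ((∫ x : ℝ, (2 * Real.cos γ *
          ‖sech ((x : ℂ) * Real.sin γ - Complex.I * γ / 2)‖ ^ 2 +
        (Real.sin γ) ^ 2 *
          ‖sech ((x : ℂ) * Real.sin γ - Complex.I * γ / 2)‖ ^ 4) : ℝ) : ℂ)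
      ≠ 0 := by
  have hsin : (Real.sin γ : ℂ) ≠ 0 :=
    Complex.ofReal_ne_zero.2 (Real.sin_pos_of_pos_of_lt_pi hγ.1 hγ.2).ne'
  rw [integral_cos_mul_norm_sech_sq_add_sin_sq_mul_norm_sech_pow_four hγ, Complex.ofReal_div,
    Complex.ofReal_ofNat]
  refine ⟨by field_simp, ?_⟩
  exact mul_ne_zero (mul_ne_zero Complex.I_ne_zero (Complex.exp_ne_zero _))
    (div_ne_zero (by norm_num) hsin)
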